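/- For every λ ∈ ℝ with λ ≠ 0, the operator H_{0λ} has exactly one even eigenvalue ζ(λ) outside [0,2] (i.e. there is exactly one real z with z < 0 or z > 2 that is an even eigenvalue); moreover ζ(λ) ∈ (2, +∞) if λ > 0, and ζ(λ) ∈ (−∞, 0) if λ < 0. -/

import Mathlib

open MeasureTheory Real Filter Topology

/-- The potential `v(0) = μ`, `v(±1) = λ/2`, `v(x) = 0` for `|x| > 1`. -/
noncomputable def pot (μ lam : ℝ) (x : ℤ) : ℝ :=
  if x = 0 then μ else if x = 1 ∨ x = -1 then lam / 2 else 0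

/-- A real number `z` is an *even eigenvalue* of the discrete Schrödinger operator
`H_{μλ}` on `ℓ²(ℤ; ℂ)`, `(H_{μλ}ψ)(x) = ψ(x) − (ψ(x+1) + ψ(x−1))/2 + v(x)ψ(x)`,
if there is a nonzero even `ψ ∈ ℓ²(ℤ; ℂ)` with `H_{μλ}ψ = zψ`. -/
def IsEvenEigenvalue (μ lam z : ℝ) : Prop :=
  ∃ ψ : lp (fun _ : ℤ => ℂ) 2, ψ ≠ 0 ∧ (∀ x : ℤ, ψ (-x) = ψ x) ∧
    ∀ x : ℤ, ψ x - (ψ (x + 1) + ψ (x - 1)) / 2 + (pot μ lam x : ℂ) * ψ x = (z : ℂ) * ψ x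

/-!
For `z` outside `[0, 2]` the free equation has a unique decaying rate `r ∈ (-1, 1)`, determined by
`r² + 1 = 2 (1 - z) r`, i.e. `z = 1 - (r + r⁻¹) / 2`; `r > 0` gives `z < 0` and `r < 0` gives
`z > 2`. Away from the potential an `ℓ²` solution is a multiple of `r^|x|`: the quantity
`ψ (n + 1) - r ψ n` gets multiplied by `r⁻¹` at each step, so it vanishes because `ψ n → 0`.
Matching at `x = 0, 1` turns the eigenvalue equation into the secular equation
`λ r (r² + 1) = r² - 1`, which has exactly one root in `(-1, 1)`, of sign opposite to `λ`;
conversely that root yields the even eigenfunction `r^|x|`, corrected at the origin.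
-/

open Set

lemma summable_pow_natAbs {ρ : ℝ} (hρ0 : 0 ≤ ρ) (hρ1 : ρ < 1) :
    Summable fun x : ℤ => ρ ^ x.natAbs := by
  have h := summable_geometric_of_lt_one hρ0 hρ1
  exact .of_nat_of_neg (by simpa using h) (by simpa using h)

lemma memℓp_of_norm_le_geometric {E : Type*} [NormedAddCommGroup E] {f : ℤ → E} {C ρ : ℝ}
    (hρ0 : 0 ≤ ρ) (hρ1 : ρ < 1) (hf : ∀ x, ‖f x‖ ≤ C * ρ ^ x.natAbs) {p : ENNReal}
    (hp : 1 ≤ p) : Memℓp f p := by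
  refine Memℓp.of_exponent_ge (memℓp_gen ?_) hp
  simp only [ENNReal.toReal_one, Real.rpow_one]
  exact .of_nonneg_of_le (fun _ => norm_nonneg _) hf ((summable_pow_natAbs hρ0 hρ1).mul_left C)

lemma Memℓp.tendsto_norm_cofinite_zero {α : Type*} {E : α → Type*}
    [∀ i, NormedAddCommGroup (E i)] {f : ∀ i, E i} {p : ENNReal} (hf : Memℓp f p)
    (hp : 0 < p.toReal) : Tendsto (fun i => ‖f i‖) cofinite (𝓝 0) := by
  have h := (hf.summable hp).tendsto_cofinite_zero.rpow_const (p := p.toReal⁻¹)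
    (Or.inr (by positivity))
  rw [Real.zero_rpow (inv_ne_zero hp.ne')] at h
  refine h.congr fun i => ?_
  rw [← Real.rpow_mul (norm_nonneg _), mul_inv_cancel₀ hp.ne', Real.rpow_one]

lemma lp.tendsto_natCast_zero {E : Type*} [NormedAddCommGroup E] {p : ENNReal} (hp : 0 < p.toReal)
    (ψ : lp (fun _ : ℤ => E) p) : Tendsto (fun n : ℕ => ψ n) atTop (𝓝 0) := by
  refine tendsto_zero_iff_norm_tendsto_zero.2
    (((lp.memℓp ψ).tendsto_norm_cofinite_zero hp).comp ?_)
  rw [← Nat.cofinite_eq_atTop]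
  exact Nat.cast_injective.tendsto_cofinite

lemma eq_zero_of_tendsto_zero_of_smul_succ {𝕜 E : Type*} [NormedField 𝕜] [NormedAddCommGroup E]
    [NormedSpace 𝕜 E] {r : 𝕜} {w : ℕ → E} (hr : ‖r‖ ≤ 1) (hw : Tendsto w atTop (𝓝 0))
    (hrec : ∀ n, r • w (n + 1) = w n) (n : ℕ) : w n = 0 := by
  have hshift : ∀ k, w n = r ^ k • w (k + n) := by
    intro k
    induction k with
    | zero => simp
    | succ k ih => rw [ih, ← hrec, smul_smul, ← pow_succ, add_right_comm]
  have hle : ∀ k, ‖w n‖ ≤ ‖w (k + n)‖ := fun k => by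
    rw [hshift k, norm_smul, norm_pow]
    exact mul_le_of_le_one_left (norm_nonneg _) (pow_le_one₀ (norm_nonneg _) hr)
  have hlim : Tendsto (fun k => ‖w (k + n)‖) atTop (𝓝 0) := by
    simpa using (hw.comp (tendsto_add_atTop_nat n)).norm
  exact norm_le_zero_iff.1 (ge_of_tendsto' hlim hle)

lemma exists_mem_Ioo_eq_zero {f : ℝ → ℝ} {a b : ℝ} (hab : a ≤ b) (hf : ContinuousOn f (Icc a b))
    (h : f a * f b < 0) : ∃ c ∈ Ioo a b, f c = 0 := by
  rcases mul_neg_iff.1 h with ⟨ha, hb⟩ | ⟨ha, hb⟩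
  · exact intermediate_value_Ioo' hab hf ⟨hb, ha⟩
  · exact intermediate_value_Ioo hab hf ⟨ha, hb⟩

lemma pot_neg (μ lam : ℝ) (x : ℤ) : pot μ lam (-x) = pot μ lam x := by
  have h0 : -x = 0 ↔ x = 0 := neg_eq_zero
  have h1 : (-x = 1 ∨ -x = -1) ↔ (x = 1 ∨ x = -1) := by omega
  simp only [pot, h0, h1]

@[simp] lemma pot_zero (μ lam : ℝ) : pot μ lam 0 = μ := by simp [pot]

@[simp] lemma pot_one (μ lam : ℝ) : pot μ lam 1 = lam / 2 := by simp [pot]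

lemma pot_of_two_le (μ lam : ℝ) {x : ℤ} (hx : 2 ≤ x) : pot μ lam x = 0 := by
  rw [pot, if_neg (by omega), if_neg (by omega)]

lemma exists_decaying_root {z : ℝ} (hz : z < 0 ∨ 2 < z) :
    ∃ r ∈ Ioo (-1 : ℝ) 1, r ^ 2 + 1 = 2 * (1 - z) * r := by
  have hf : Continuous fun r : ℝ => r ^ 2 + 1 - 2 * (1 - z) * r := by fun_prop
  rcases hz with hz | hz
  · obtain ⟨r, ⟨hr0, hr1⟩, hr⟩ :=
      exists_mem_Ioo_eq_zero zero_le_one hf.continuousOn (by norm_num; linarith)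
    exact ⟨r, ⟨by linarith, hr1⟩, sub_eq_zero.1 hr⟩
  · obtain ⟨r, ⟨hr1, hr0⟩, hr⟩ :=
      exists_mem_Ioo_eq_zero neg_one_lt_zero.le hf.continuousOn (by norm_num; linarith)
    exact ⟨r, ⟨hr1, by linarith⟩, sub_eq_zero.1 hr⟩

lemma lt_zero_of_sq_add_one_eq {r z : ℝ} (hr : r ∈ Ioo (0 : ℝ) 1)
    (h : r ^ 2 + 1 = 2 * (1 - z) * r) : z < 0 := by
  nlinarith [hr.1, hr.2]

lemma two_lt_of_sq_add_one_eq {r z : ℝ} (hr : r ∈ Ioo (-1 : ℝ) 0)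
    (h : r ^ 2 + 1 = 2 * (1 - z) * r) : 2 < z := by
  nlinarith [hr.1, hr.2]

lemma exists_secular_root {lam : ℝ} (hlam : lam ≠ 0) :
    ∃ r ∈ Ioo (-1 : ℝ) 1, lam * r < 0 ∧ lam * r * (r ^ 2 + 1) = r ^ 2 - 1 := by
  have hf : Continuous fun r : ℝ => lam * r * (r ^ 2 + 1) - (r ^ 2 - 1) := by fun_prop
  rcases hlam.lt_or_gt with hlam | hlam
  · obtain ⟨r, ⟨hr0, hr1⟩, hr⟩ :=
      exists_mem_Ioo_eq_zero zero_le_one hf.continuousOn (by norm_num; linarith)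
    exact ⟨r, ⟨by linarith, hr1⟩, mul_neg_of_neg_of_pos hlam hr0, sub_eq_zero.1 hr⟩
  · obtain ⟨r, ⟨hr1, hr0⟩, hr⟩ :=
      exists_mem_Ioo_eq_zero neg_one_lt_zero.le hf.continuousOn (by norm_num; linarith)
    exact ⟨r, ⟨hr1, by linarith⟩, mul_neg_of_pos_of_neg hlam hr0, sub_eq_zero.1 hr⟩

lemma secular_root_unique {lam r s : ℝ} (hr : r ∈ Ioo (-1 : ℝ) 1) (hs : s ∈ Ioo (-1 : ℝ) 1)
    (hr' : lam * r * (r ^ 2 + 1) = r ^ 2 - 1) (hs' : lam * s * (s ^ 2 + 1) = s ^ 2 - 1) :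
    r = s := by
  obtain ⟨hr1, hr2⟩ := hr
  obtain ⟨hs1, hs2⟩ := hs
  have hfactor : (r - s) * ((r + s) ^ 2 + (1 - r ^ 2 * s ^ 2)) = 0 := by
    linear_combination r * (r ^ 2 + 1) * hs' - s * (s ^ 2 + 1) * hr'
  have hpos : 0 < (r + s) ^ 2 + (1 - r ^ 2 * s ^ 2) := by
    have : r ^ 2 * s ^ 2 < 1 := by
      rw [← mul_pow, sq_lt_one_iff_abs_lt_one, abs_lt]; constructor <;> nlinarith
    nlinarith [sq_nonneg (r + s)]
  exact sub_eq_zero.1 ((mul_eq_zero.1 hfactor).resolve_right hpos.ne')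

-- The value `2 r²` at the origin is forced by the equation at `x = 0`, as `2 (1 - z) r = 1 + r²`.
def evenBoundState (r : ℝ) (x : ℤ) : ℝ :=
  if x = 0 then 2 * r ^ 2 else (1 + r ^ 2) * r ^ x.natAbs

lemma evenBoundState_neg (r : ℝ) (x : ℤ) : evenBoundState r (-x) = evenBoundState r x := by
  simp only [evenBoundState, neg_eq_zero, Int.natAbs_neg]

lemma abs_evenBoundState_le {r : ℝ} (hr : r ∈ Ioo (-1 : ℝ) 1) (x : ℤ) :
    |evenBoundState r x| ≤ 2 * |r| ^ x.natAbs := by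
  have hr2 : r ^ 2 < 1 := by rw [sq_lt_one_iff_abs_lt_one, abs_lt]; exact hr
  unfold evenBoundState
  split_ifs with hx
  · rw [hx, abs_of_nonneg (by positivity), Int.natAbs_zero, pow_zero]; linarith
  · rw [abs_mul, abs_pow, abs_of_pos (by positivity : 0 < 1 + r ^ 2)]
    gcongr; linarith

lemma evenBoundState_eigen {lam r z : ℝ} (hsec : lam * r * (r ^ 2 + 1) = r ^ 2 - 1)
    (hz : r ^ 2 + 1 = 2 * (1 - z) * r) (x : ℤ) :
    evenBoundState r x - (evenBoundState r (x + 1) + evenBoundState r (x - 1)) / 2 +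
      pot 0 lam x * evenBoundState r x = z * evenBoundState r x := by
  wlog hx : 0 ≤ x generalizing x
  · have h := this (-x) (by omega)
    rwa [show -x + 1 = -(x - 1) by ring, show -x - 1 = -(x + 1) by ring, evenBoundState_neg,
      evenBoundState_neg, evenBoundState_neg, pot_neg, add_comm (evenBoundState r (x - 1))] at h
  obtain ⟨m, rfl⟩ := Int.eq_ofNat_of_zero_le hx
  rcases m with _ | _ | n
  · norm_num [evenBoundState]
    linear_combination (-r) * hz
  · norm_num [evenBoundState]
    linear_combination (1 / 2) * hsec - ((1 + r ^ 2) / 2) * hz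
  · have hn : ∀ k : ℕ, ((n : ℤ) + k).natAbs = n + k := fun k => by omega
    rw [show ((n + 1 + 1 : ℕ) : ℤ) + 1 = n + (3 : ℕ) by push_cast; ring,
      show ((n + 1 + 1 : ℕ) : ℤ) - 1 = n + (1 : ℕ) by push_cast; ring,
      show ((n + 1 + 1 : ℕ) : ℤ) = n + (2 : ℕ) by push_cast; ring]
    simp only [evenBoundState, hn, pot_of_two_le 0 lam (show (2 : ℤ) ≤ n + (2 : ℕ) by omega)]
    rw [if_neg (by omega), if_neg (by omega), if_neg (by omega)]
    linear_combination (-(1 : ℝ) / 2) * (1 + r ^ 2) * r ^ (n + 1) * hz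

lemma isEvenEigenvalue_of_secular {lam r z : ℝ} (hr : r ∈ Ioo (-1 : ℝ) 1)
    (hsec : lam * r * (r ^ 2 + 1) = r ^ 2 - 1) (hz : r ^ 2 + 1 = 2 * (1 - z) * r) :
    IsEvenEigenvalue 0 lam z := by
  have hr0 : r ≠ 0 := by rintro rfl; norm_num at hz
  have hmem : Memℓp (fun x : ℤ => (evenBoundState r x : ℂ)) 2 :=
    memℓp_of_norm_le_geometric (abs_nonneg r) (abs_lt.2 hr)
      (fun x => by simpa using abs_evenBoundState_le hr x) one_le_two
  refine ⟨⟨_, hmem⟩, fun h => ?_, fun x => by simp [evenBoundState_neg], fun x => ?_⟩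
  · have h1 : (evenBoundState r 1 : ℂ) = 0 := congrFun (congrArg Subtype.val h) 1
    norm_num [evenBoundState] at h1
    norm_cast at h1
    exact h1.elim (by positivity : (0 : ℝ) < 1 + r ^ 2).ne' hr0
  · show (evenBoundState r x : ℂ) - (evenBoundState r (x + 1) + evenBoundState r (x - 1)) / 2 +
        pot 0 lam x * evenBoundState r x = z * evenBoundState r x
    exact_mod_cast evenBoundState_eigen hsec hz x

lemma eigen_tail_geometric {μ lam z r : ℝ} {ψ : ℤ → ℂ}
    (hψ : Tendsto (fun n : ℕ => ψ n) atTop (𝓝 0)) (hr : |r| ≤ 1)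
    (hz : r ^ 2 + 1 = 2 * (1 - z) * r)
    (heig : ∀ x : ℤ, ψ x - (ψ (x + 1) + ψ (x - 1)) / 2 + (pot μ lam x : ℂ) * ψ x = z * ψ x)
    (n : ℕ) : ψ (n + 2) = r * ψ (n + 1) := by
  set w : ℕ → ℂ := fun n => ψ (n + 2) - r * ψ (n + 1)
  have hw : Tendsto w atTop (𝓝 0) := by
    have h1 := hψ.comp (tendsto_add_atTop_nat 1)
    have h2 := hψ.comp (tendsto_add_atTop_nat 2)
    simpa [w, Function.comp_def] using h2.sub (h1.const_mul (r : ℂ))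
  have hrec : ∀ n, (r : ℂ) • w (n + 1) = w n := by
    intro n
    have h := heig (n + 2)
    rw [pot_of_two_le μ lam (by omega)] at h
    have hz' : (r : ℂ) ^ 2 + 1 = 2 * (1 - z) * r := by exact_mod_cast hz
    simp only [w, smul_eq_mul]
    push_cast at h ⊢
    rw [show (n : ℤ) + 1 + 2 = n + 2 + 1 by ring, show (n : ℤ) + 1 + 1 = n + 2 by ring]
    rw [show (n : ℤ) + 2 - 1 = n + 1 by ring] at h
    linear_combination (-2 * r : ℂ) * h - ψ (n + 2) * hz'
  exact sub_eq_zero.1 (eq_zero_of_tendsto_zero_of_smul_succ (by simpa using hr) hw hrec n)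

lemma secular_of_isEvenEigenvalue {lam z r : ℝ} (hr : r ∈ Ioo (-1 : ℝ) 1)
    (hz : r ^ 2 + 1 = 2 * (1 - z) * r) (h : IsEvenEigenvalue 0 lam z) :
    lam * r * (r ^ 2 + 1) = r ^ 2 - 1 := by
  obtain ⟨ψ, hψ0, heven, heig⟩ := h
  have htail := eigen_tail_geometric (lp.tendsto_natCast_zero (by norm_num) ψ) (abs_lt.2 hr).le hz
    heig
  have hz' : (r : ℂ) ^ 2 + 1 = 2 * (1 - z) * r := by exact_mod_cast hz
  have hc : (1 - z : ℂ) ≠ 0 := by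
    intro hc
    rw [hc, mul_zero, zero_mul] at hz'
    have : (0 : ℝ) < r ^ 2 + 1 := by positivity
    exact this.ne' (by exact_mod_cast hz')
  have hcenter : (1 - z : ℂ) * ψ 0 = ψ 1 := by
    have h := heig 0
    rw [zero_sub, heven, zero_add, pot_zero] at h
    push_cast at h
    linear_combination h
  have hψ1 : ψ 1 ≠ 0 := by
    intro h1
    have hsucc : ∀ n : ℕ, ψ (n + 1) = 0 := by
      intro n
      induction n with
      | zero => simpa using h1
      | succ n ih => rw [Nat.cast_succ, add_assoc, one_add_one_eq_two, htail, ih, mul_zero]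
    have hnat : ∀ n : ℕ, ψ n = 0 := by
      rintro (_ | n)
      · simpa [h1, hc] using hcenter
      · simpa using hsucc n
    apply hψ0
    ext x
    rcases Int.natAbs_eq x with hx | hx <;> rw [hx]
    · exact hnat _
    · rw [heven]; exact hnat _
  have hψ2 : ψ 2 = r * ψ 1 := by simpa using htail 0
  have h1 := heig 1
  rw [pot_one, show (1 : ℤ) + 1 = 2 by norm_num, sub_self, hψ2] at h1
  push_cast at h1
  -- eliminate `ψ 0` and `1 - z` between the equations at `x = 0` and `x = 1`
  have : ψ 1 * ((lam * r * (r ^ 2 + 1) : ℂ) - (r ^ 2 - 1)) = 0 := by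
    linear_combination 2 * r ^ 2 * ((1 - z) * (2 * h1) + hcenter) +
      ψ 1 * (lam * r + 1 + 2 * (1 - z) * r) * hz'
  have key : ((lam * r * (r ^ 2 + 1) : ℝ) : ℂ) = ((r ^ 2 - 1 : ℝ) : ℂ) := by
    push_cast
    exact sub_eq_zero.1 ((mul_eq_zero.1 this).resolve_left hψ1)
  exact_mod_cast key

/-- For every `λ ≠ 0`, the operator `H_{0λ}` has exactly one even eigenvalue `ζ(λ)`
outside `[0,2]`; moreover `ζ(λ) ∈ (2, +∞)` if `λ > 0`, and `ζ(λ) ∈ (−∞, 0)` if `λ < 0`. -/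
theorem unique_even_eigenvalue_H0lam (lam : ℝ) (hlam : lam ≠ 0) :
    ∃ ζ : ℝ, ((ζ < 0 ∨ 2 < ζ) ∧ IsEvenEigenvalue 0 lam ζ) ∧
      (∀ z : ℝ, (z < 0 ∨ 2 < z) → IsEvenEigenvalue 0 lam z → z = ζ) ∧
      (0 < lam → 2 < ζ) ∧ (lam < 0 → ζ < 0) := by
  obtain ⟨r, hr, hsign, hsec⟩ := exists_secular_root hlam
  have hr0 : r ≠ 0 := by rintro rfl; simp at hsign
  set ζ := 1 - (r ^ 2 + 1) / (2 * r)
  have hζ : r ^ 2 + 1 = 2 * (1 - ζ) * r := by simp only [ζ]; field_simp; ring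
  have hpos : 0 < lam → 2 < ζ := fun hl =>
    two_lt_of_sq_add_one_eq ⟨hr.1, neg_of_mul_neg_right hsign hl.le⟩ hζ
  have hneg : lam < 0 → ζ < 0 := fun hl =>
    lt_zero_of_sq_add_one_eq ⟨pos_of_mul_neg_right hsign hl.le, hr.2⟩ hζ
  refine ⟨ζ, ⟨?_, isEvenEigenvalue_of_secular hr hsec hζ⟩, fun z hz hzeig => ?_, hpos, hneg⟩
  · rcases hlam.lt_or_gt with hl | hl
    exacts [Or.inl (hneg hl), Or.inr (hpos hl)]
  · obtain ⟨s, hs, hsz⟩ := exists_decaying_root hz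
    obtain rfl := secular_root_unique hs hr (secular_of_isEvenEigenvalue hs hsz hzeig) hsec
    have h := mul_right_cancel₀ hr0 (hsz.symm.trans hζ)
    linarith
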